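/- arXiv:2407.05717 — 4 statements merged into one kernel-verified Lean document; each statement's English description precedes it below -/
import Mathlib

section
/- Let (Ω, 𝓕, ℙ) be a probability space, let m n be positive integers, let S be a (deterministic) symmetric positive definite real n×n matrix and P̄xy a (deterministic) real m×n matrix. Let X : Ω → Matrix(m,n,ℝ) be a random matrix with E[X] = P̄xy and let T : Ω → Matrix(n,n,ℝ) be a random matrix such that T(ω) is symmetric and positive definite almost surely, with E[T] = S; assume all matrix-valued expressions below are entrywise integrable. Define the random matrices P_est = −X·T⁻¹·Xᵀ and P_ac = X·T⁻¹·S·T⁻¹·Xᵀ − P̄xy·T⁻¹·Xᵀ − X·T⁻¹·P̄xyᵀ. Then the matrix E[P_ac − P_est] is positive semidefinite. -/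
open Matrix MeasureTheory

/-!
Fix `v` and put `u = T⁻¹ Xᵀ v`. Then `vᵀ (P_ac − P_est) v = uᵀ S u − 2 (Pxyᵀ v)ᵀ u + uᵀ T u`.
Completing the square in the `S`- and the `T`-form around `q = S⁻¹ Pxyᵀ v` bounds this from
below by `2 vᵀ X q − qᵀ T q − qᵀ S q`, which is affine in `(X, T)`. Unbiasedness of `X` and `T`
makes the mean of this minorant `2 qᵀ S q − qᵀ S q − qᵀ S q = 0`.
-/

namespace Matrix

variable {l m n : Type*} [Fintype m] [Fintype n]

theorem dotProduct_mul_mulVec [Fintype l] (x : l → ℝ) (A : Matrix l m ℝ) (B : Matrix m n ℝ)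
    (y : n → ℝ) : x ⬝ᵥ (A * B) *ᵥ y = (Aᵀ *ᵥ x) ⬝ᵥ B *ᵥ y := by
  rw [← mulVec_mulVec, dotProduct_mulVec, mulVec_transpose]

theorem IsHermitian.dotProduct_mulVec_comm {A : Matrix n n ℝ} (hA : A.IsHermitian)
    (x y : n → ℝ) : x ⬝ᵥ A *ᵥ y = y ⬝ᵥ A *ᵥ x := by
  rw [← dotProduct_transpose_mulVec, ← conjTranspose_eq_transpose_of_trivial, hA.eq]

theorem PosSemidef.two_mul_dotProduct_mulVec_sub_le {A : Matrix n n ℝ} (hA : A.PosSemidef)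
    (u q : n → ℝ) : 2 * (u ⬝ᵥ A *ᵥ q) - q ⬝ᵥ A *ᵥ q ≤ u ⬝ᵥ A *ᵥ u := by
  have := hA.dotProduct_mulVec_nonneg (u - q)
  simp only [star_trivial, mulVec_sub, dotProduct_sub, sub_dotProduct,
    hA.isHermitian.dotProduct_mulVec_comm q u] at this
  linarith

variable [DecidableEq n] {S T : Matrix n n ℝ}

theorem mulVec_nonsing_inv_mulVec {α : Type*} [CommRing α] {A : Matrix n n α}
    (h : IsUnit A.det) (x : n → α) : A *ᵥ A⁻¹ *ᵥ x = x := by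
  rw [mulVec_mulVec, mul_nonsing_inv _ h, one_mulVec]

theorem IsHermitian.transpose_inv (hT : T.IsHermitian) : (T⁻¹)ᵀ = T⁻¹ := by
  rw [transpose_nonsing_inv, ← conjTranspose_eq_transpose_of_trivial, hT.eq]

/-- `P_ac − P_est` for the gain `X T⁻¹`, with `P` the true cross-covariance. -/
noncomputable def covarianceGap (P : Matrix m n ℝ) (S : Matrix n n ℝ) (X : Matrix m n ℝ)
    (T : Matrix n n ℝ) : Matrix m m ℝ :=
  X * T⁻¹ * S * T⁻¹ * Xᵀ - P * T⁻¹ * Xᵀ - X * T⁻¹ * Pᵀ + X * T⁻¹ * Xᵀ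

omit [Fintype m] in
theorem isHermitian_covarianceGap (hS : S.IsHermitian) (hT : T.IsHermitian)
    (P X : Matrix m n ℝ) : (covarianceGap P S X T).IsHermitian := by
  rw [IsHermitian, conjTranspose_eq_transpose_of_trivial, covarianceGap]
  simp only [transpose_add, transpose_sub, transpose_mul, transpose_transpose, hT.transpose_inv,
    ← conjTranspose_eq_transpose_of_trivial S, hS.eq, Matrix.mul_assoc]
  abel

theorem le_dotProduct_covarianceGap_mulVec (hS : S.PosSemidef) (hT : T.PosDef)
    (P X : Matrix m n ℝ) {v : m → ℝ} {q : n → ℝ} (hq : S *ᵥ q = Pᵀ *ᵥ v) :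
    2 * (v ⬝ᵥ X *ᵥ q) - q ⬝ᵥ T *ᵥ q - q ⬝ᵥ S *ᵥ q ≤ v ⬝ᵥ covarianceGap P S X T *ᵥ v := by
  have hTinv := hT.isHermitian.transpose_inv
  have hdet : IsUnit T.det := (isUnit_iff_isUnit_det T).mp hT.isUnit
  set u := T⁻¹ *ᵥ Xᵀ *ᵥ v
  have hquad (A : Matrix n n ℝ) : v ⬝ᵥ (X * T⁻¹ * A * T⁻¹ * Xᵀ) *ᵥ v = u ⬝ᵥ A *ᵥ u := by
    simp only [Matrix.mul_assoc]
    rw [dotProduct_mul_mulVec, dotProduct_mul_mulVec, hTinv, ← mulVec_mulVec, ← mulVec_mulVec]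
  have hleft : v ⬝ᵥ (P * T⁻¹ * Xᵀ) *ᵥ v = (S *ᵥ q) ⬝ᵥ u := by
    rw [Matrix.mul_assoc, dotProduct_mul_mulVec, ← mulVec_mulVec, hq]
  have hright : v ⬝ᵥ (X * T⁻¹ * Pᵀ) *ᵥ v = u ⬝ᵥ S *ᵥ q := by
    rw [dotProduct_mul_mulVec, transpose_mul, hTinv, ← mulVec_mulVec, hq]
  have hXT : X * T⁻¹ * Xᵀ = X * T⁻¹ * T * T⁻¹ * Xᵀ := by
    rw [nonsing_inv_mul_cancel_right _ _ hdet]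
  have hTuq : u ⬝ᵥ T *ᵥ q = v ⬝ᵥ X *ᵥ q := by
    rw [hT.isHermitian.dotProduct_mulVec_comm, mulVec_nonsing_inv_mulVec hdet,
      dotProduct_transpose_mulVec]
  have hS_bound := hS.two_mul_dotProduct_mulVec_sub_le u q
  have hT_bound := hT.posSemidef.two_mul_dotProduct_mulVec_sub_le u q
  rw [covarianceGap, hXT, add_mulVec, sub_mulVec, sub_mulVec, dotProduct_add, dotProduct_sub,
    dotProduct_sub, hquad, hquad, hleft, hright, dotProduct_comm (S *ᵥ q)]
  linarith

end Matrix

section Expectation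

variable {Ω m n : Type*} [MeasurableSpace Ω] {μ : Measure Ω} [Fintype m] [Fintype n]

theorem integrable_dotProduct_mulVec {M : Ω → Matrix m n ℝ}
    (hM : ∀ i j, Integrable (fun ω => M ω i j) μ) (x : m → ℝ) (y : n → ℝ) :
    Integrable (fun ω => x ⬝ᵥ M ω *ᵥ y) μ := by
  simp only [dotProduct, mulVec, Finset.mul_sum]
  exact integrable_finsetSum _ fun i _ => integrable_finsetSum _ fun j _ =>
    ((hM i j).mul_const _).const_mul _

theorem integral_dotProduct_mulVec {M : Ω → Matrix m n ℝ}
    (hM : ∀ i j, Integrable (fun ω => M ω i j) μ) (x : m → ℝ) (y : n → ℝ) :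
    ∫ ω, x ⬝ᵥ M ω *ᵥ y ∂μ = x ⬝ᵥ (of fun i j => ∫ ω, M ω i j ∂μ) *ᵥ y := by
  simp only [dotProduct, mulVec, Finset.mul_sum, of_apply]
  rw [integral_finsetSum _ fun i _ => integrable_finsetSum _ fun j _ =>
    ((hM i j).mul_const _).const_mul _]
  refine Finset.sum_congr rfl fun i _ => ?_
  rw [integral_finsetSum _ fun j _ => ((hM i j).mul_const _).const_mul _]
  refine Finset.sum_congr rfl fun j _ => ?_
  rw [integral_const_mul, integral_mul_const]

omit [Fintype n] in
theorem isHermitian_integral_of_ae {M : Ω → Matrix n n ℝ} (hM : ∀ᵐ ω ∂μ, (M ω).IsHermitian) :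
    (of fun i j => ∫ ω, M ω i j ∂μ).IsHermitian := by
  ext i j
  refine integral_congr_ae ?_
  filter_upwards [hM] with ω hω
  exact congr_fun₂ hω i j

theorem integral_two_mul_dotProduct_mulVec_sub_eq_zero [IsProbabilityMeasure μ]
    {X : Ω → Matrix m n ℝ} {T : Ω → Matrix n n ℝ} {P : Matrix m n ℝ} {S : Matrix n n ℝ}
    (hXint : ∀ i j, Integrable (fun ω => X ω i j) μ)
    (hTint : ∀ i j, Integrable (fun ω => T ω i j) μ)
    (hXmean : (of fun i j => ∫ ω, X ω i j ∂μ) = P) (hTmean : (of fun i j => ∫ ω, T ω i j ∂μ) = S)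
    {v : m → ℝ} {q : n → ℝ} (hq : S *ᵥ q = Pᵀ *ᵥ v) :
    ∫ ω, 2 * (v ⬝ᵥ X ω *ᵥ q) - q ⬝ᵥ T ω *ᵥ q - q ⬝ᵥ S *ᵥ q ∂μ = 0 := by
  have hXq := (integrable_dotProduct_mulVec hXint v q).const_mul 2
  have hTq := integrable_dotProduct_mulVec hTint q q
  have hXTq : Integrable (fun ω => 2 * (v ⬝ᵥ X ω *ᵥ q) - q ⬝ᵥ T ω *ᵥ q) μ := hXq.sub hTq
  rw [integral_sub hXTq (integrable_const _), integral_sub hXq hTq, integral_const_mul,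
    integral_dotProduct_mulVec hXint, integral_dotProduct_mulVec hTint, hXmean, hTmean,
    integral_const, probReal_univ, one_smul, ← dotProduct_transpose_mulVec, ← hq]
  ring

end Expectation

theorem conventional_framework_underestimates_covariance_general
    {Ω : Type*} [MeasurableSpace Ω] (ℙ : Measure Ω) [IsProbabilityMeasure ℙ]
    {m n : ℕ}
    (S : Matrix (Fin n) (Fin n) ℝ) (hS : S.PosDef)
    (Pxy : Matrix (Fin m) (Fin n) ℝ)
    (X : Ω → Matrix (Fin m) (Fin n) ℝ)
    (T : Ω → Matrix (Fin n) (Fin n) ℝ)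
    (hTpd : ∀ᵐ ω ∂ℙ, (T ω).PosDef)
    (hXmean : (Matrix.of fun i j => ∫ ω, X ω i j ∂ℙ) = Pxy)
    (hTmean : (Matrix.of fun i j => ∫ ω, T ω i j ∂ℙ) = S)
    (Pest Pac : Ω → Matrix (Fin m) (Fin m) ℝ)
    (hPest : ∀ ω, Pest ω = -(X ω * (T ω)⁻¹ * (X ω)ᵀ))
    (hPac : ∀ ω, Pac ω =
      X ω * (T ω)⁻¹ * S * (T ω)⁻¹ * (X ω)ᵀ
        - Pxy * (T ω)⁻¹ * (X ω)ᵀ - X ω * (T ω)⁻¹ * Pxyᵀ)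
    (hXint : ∀ i j, Integrable (fun ω => X ω i j) ℙ)
    (hTint : ∀ i j, Integrable (fun ω => T ω i j) ℙ)
    (hPestInt : ∀ i j, Integrable (fun ω => Pest ω i j) ℙ)
    (hPacInt : ∀ i j, Integrable (fun ω => Pac ω i j) ℙ) :
    (Matrix.of fun i j => ∫ ω, (Pac ω - Pest ω) i j ∂ℙ).PosSemidef := by
  have hD (ω : Ω) : Pac ω - Pest ω = covarianceGap Pxy S (X ω) (T ω) := by
    rw [hPac, hPest, covarianceGap, sub_neg_eq_add]
  have hDint (i j) : Integrable (fun ω => (Pac ω - Pest ω) i j) ℙ :=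
    (hPacInt i j).sub (hPestInt i j)
  refine posSemidef_iff_dotProduct_mulVec.mpr ⟨isHermitian_integral_of_ae ?_, fun v => ?_⟩
  · filter_upwards [hTpd] with ω hTω
    rw [hD]
    exact isHermitian_covarianceGap hS.isHermitian hTω.isHermitian _ _
  set q := S⁻¹ *ᵥ Pxyᵀ *ᵥ v
  have hq : S *ᵥ q = Pxyᵀ *ᵥ v :=
    mulVec_nonsing_inv_mulVec ((isUnit_iff_isUnit_det S).mp hS.isUnit) _
  have hminorant_int : Integrable (fun ω => 2 * (v ⬝ᵥ X ω *ᵥ q) - q ⬝ᵥ T ω *ᵥ q - q ⬝ᵥ S *ᵥ q) ℙ :=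
    (((integrable_dotProduct_mulVec hXint v q).const_mul 2).sub
      (integrable_dotProduct_mulVec hTint q q)).sub (integrable_const _)
  rw [star_trivial, ← integral_dotProduct_mulVec hDint,
    ← integral_two_mul_dotProduct_mulVec_sub_eq_zero hXint hTint hXmean hTmean hq]
  refine integral_mono_ae hminorant_int (integrable_dotProduct_mulVec hDint v v) ?_
  filter_upwards [hTpd] with ω hTω
  rw [hD]
  exact le_dotProduct_covarianceGap_mulVec hS.posSemidef hTω _ _ hq

/-- **Theorem 1 of the paper (inequality part).**
If `X` is an unbiased random approximation of the cross-covariance `Pxy` and `T` is an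
almost surely symmetric positive definite unbiased random approximation of the residual
covariance `S`, then the expected difference between the actual covariance change
`P_ac = X T⁻¹ S T⁻¹ Xᵀ − Pxy T⁻¹ Xᵀ − X T⁻¹ Pxyᵀ` and the estimated covariance change
`P_est = −X T⁻¹ Xᵀ` is positive semidefinite. Expectation is taken entrywise. -/
theorem conventional_framework_underestimates_covariance
    {Ω : Type*} [MeasurableSpace Ω] (ℙ : Measure Ω) [IsProbabilityMeasure ℙ]
    {m n : ℕ} (hm : 0 < m) (hn : 0 < n)
    (S : Matrix (Fin n) (Fin n) ℝ) (hS : S.PosDef)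
    (Pxy : Matrix (Fin m) (Fin n) ℝ)
    (X : Ω → Matrix (Fin m) (Fin n) ℝ)
    (T : Ω → Matrix (Fin n) (Fin n) ℝ)
    (hTpd : ∀ᵐ ω ∂ℙ, (T ω).PosDef)
    (hXmean : (Matrix.of fun i j => ∫ ω, X ω i j ∂ℙ) = Pxy)
    (hTmean : (Matrix.of fun i j => ∫ ω, T ω i j ∂ℙ) = S)
    (Pest Pac : Ω → Matrix (Fin m) (Fin m) ℝ)
    (hPest : ∀ ω, Pest ω = -(X ω * (T ω)⁻¹ * (X ω)ᵀ))
    (hPac : ∀ ω, Pac ω =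
      X ω * (T ω)⁻¹ * S * (T ω)⁻¹ * (X ω)ᵀ
        - Pxy * (T ω)⁻¹ * (X ω)ᵀ - X ω * (T ω)⁻¹ * Pxyᵀ)
    (hXint : ∀ i j, Integrable (fun ω => X ω i j) ℙ)
    (hTint : ∀ i j, Integrable (fun ω => T ω i j) ℙ)
    (hPestInt : ∀ i j, Integrable (fun ω => Pest ω i j) ℙ)
    (hPacInt : ∀ i j, Integrable (fun ω => Pac ω i j) ℙ) :
    (Matrix.of fun i j => ∫ ω, (Pac ω - Pest ω) i j ∂ℙ).PosSemidef :=
  conventional_framework_underestimates_covariance_general ℙ S hS Pxy X T hTpd hXmean hTmean Pest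
    Pac hPest hPac hXint hTint hPestInt hPacInt
end

section
/- Let (Ω, 𝓕, ℙ) be a probability space, let S be a symmetric positive definite real n×n matrix and P̄xy a real m×n matrix, let X : Ω → Matrix(m,n,ℝ) satisfy E[X] = P̄xy, and let T : Ω → Matrix(n,n,ℝ) be almost surely symmetric positive definite with E[T] = S, with all matrix expressions below entrywise integrable. Define P_est = −X·T⁻¹·Xᵀ and P_ac = X·T⁻¹·S·T⁻¹·Xᵀ − P̄xy·T⁻¹·Xᵀ − X·T⁻¹·P̄xyᵀ. If E[P_ac − P_est] = 0 (the zero matrix), then the random matrix X·T⁻¹ is almost surely constant. -/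
/-!
Write `K = X T⁻¹` and pick `C` with `C S = P̄xy`. The matrix `(K - C)(S + T)(K - C)ᵀ`, positive
semidefinite, equals `P_ac - P_est` plus `C S Cᵀ + C T Cᵀ - C Xᵀ - X Cᵀ`, a term affine in `X` and
`T` whose expectation vanishes because `E[X] = C S` and `E[T] = S`. Hence it has expectation zero,
so it vanishes almost surely, and as `S + T` is positive definite, `K = C` almost surely. The
argument never needs `K` itself to be integrable.
-/

open Matrix MeasureTheory

namespace MeasureTheory

variable {Ω : Type*} [MeasurableSpace Ω] {μ : Measure Ω} {l m n : Type*}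

noncomputable def entrywiseIntegral (μ : Measure Ω) (Y : Ω → Matrix m n ℝ) : Matrix m n ℝ :=
  Matrix.of fun i j => ∫ ω, Y ω i j ∂μ

def EntrywiseIntegrable (μ : Measure Ω) (Y : Ω → Matrix m n ℝ) : Prop :=
  ∀ i j, Integrable (fun ω => Y ω i j) μ

namespace EntrywiseIntegrable

variable {Y Z : Ω → Matrix m n ℝ}

lemma add (hY : EntrywiseIntegrable μ Y) (hZ : EntrywiseIntegrable μ Z) :
    EntrywiseIntegrable μ fun ω => Y ω + Z ω :=
  fun i j => (hY i j).add (hZ i j)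

lemma sub (hY : EntrywiseIntegrable μ Y) (hZ : EntrywiseIntegrable μ Z) :
    EntrywiseIntegrable μ fun ω => Y ω - Z ω :=
  fun i j => (hY i j).sub (hZ i j)

lemma transpose (hY : EntrywiseIntegrable μ Y) : EntrywiseIntegrable μ fun ω => (Y ω)ᵀ :=
  fun i j => hY j i

lemma const_mul [Fintype m] (hY : EntrywiseIntegrable μ Y) (A : Matrix l m ℝ) :
    EntrywiseIntegrable μ fun ω => A * Y ω :=
  fun i j => by
    simp only [mul_apply]
    exact integrable_finsetSum _ fun k _ => (hY k j).const_mul _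

lemma mul_const [Fintype n] (hY : EntrywiseIntegrable μ Y) (B : Matrix n l ℝ) :
    EntrywiseIntegrable μ fun ω => Y ω * B :=
  fun i j => by
    simp only [mul_apply]
    exact integrable_finsetSum _ fun k _ => (hY i k).mul_const _

end EntrywiseIntegrable

lemma entrywiseIntegrable_const [IsFiniteMeasure μ] (A : Matrix m n ℝ) :
    EntrywiseIntegrable μ fun _ => A :=
  fun _ _ => integrable_const _

variable {Y Z : Ω → Matrix m n ℝ}

lemma entrywiseIntegral_add (hY : EntrywiseIntegrable μ Y) (hZ : EntrywiseIntegrable μ Z) :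
    entrywiseIntegral μ (fun ω => Y ω + Z ω) = entrywiseIntegral μ Y + entrywiseIntegral μ Z :=
  Matrix.ext fun i j => integral_add (hY i j) (hZ i j)

lemma entrywiseIntegral_sub (hY : EntrywiseIntegrable μ Y) (hZ : EntrywiseIntegrable μ Z) :
    entrywiseIntegral μ (fun ω => Y ω - Z ω) = entrywiseIntegral μ Y - entrywiseIntegral μ Z :=
  Matrix.ext fun i j => integral_sub (hY i j) (hZ i j)

lemma entrywiseIntegral_transpose :
    entrywiseIntegral μ (fun ω => (Y ω)ᵀ) = (entrywiseIntegral μ Y)ᵀ :=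
  rfl

lemma entrywiseIntegral_const_mul [Fintype m] (hY : EntrywiseIntegrable μ Y)
    (A : Matrix l m ℝ) :
    entrywiseIntegral μ (fun ω => A * Y ω) = A * entrywiseIntegral μ Y :=
  Matrix.ext fun i j => by
    simp only [entrywiseIntegral, of_apply, mul_apply]
    rw [integral_finsetSum _ fun k _ => (hY k j).const_mul _]
    simp only [integral_const_mul]

lemma entrywiseIntegral_mul_const [Fintype n] (hY : EntrywiseIntegrable μ Y)
    (B : Matrix n l ℝ) :
    entrywiseIntegral μ (fun ω => Y ω * B) = entrywiseIntegral μ Y * B :=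
  Matrix.ext fun i j => by
    simp only [entrywiseIntegral, of_apply, mul_apply]
    rw [integral_finsetSum _ fun k _ => (hY i k).mul_const _]
    simp only [integral_mul_const]

lemma entrywiseIntegral_const [IsProbabilityMeasure μ] (A : Matrix m n ℝ) :
    entrywiseIntegral μ (fun _ => A) = A :=
  Matrix.ext fun _ _ => by simp [entrywiseIntegral]

section Correction

variable [Fintype n] {X : Ω → Matrix m n ℝ} {T : Ω → Matrix n n ℝ} (C : Matrix m n ℝ)
  (S : Matrix n n ℝ)

lemma EntrywiseIntegrable.correction [IsFiniteMeasure μ] (hX : EntrywiseIntegrable μ X)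
    (hT : EntrywiseIntegrable μ T) :
    EntrywiseIntegrable μ fun ω => C * S * Cᵀ + C * T ω * Cᵀ - C * (X ω)ᵀ - X ω * Cᵀ :=
  (((entrywiseIntegrable_const _).add ((hT.const_mul C).mul_const Cᵀ)).sub
    (hX.transpose.const_mul C)).sub (hX.mul_const Cᵀ)

lemma entrywiseIntegral_correction_eq_zero [IsProbabilityMeasure μ]
    (hX : EntrywiseIntegrable μ X) (hT : EntrywiseIntegrable μ T) (hS : Sᵀ = S)
    (hXmean : entrywiseIntegral μ X = C * S) (hTmean : entrywiseIntegral μ T = S) :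
    entrywiseIntegral μ (fun ω => C * S * Cᵀ + C * T ω * Cᵀ - C * (X ω)ᵀ - X ω * Cᵀ) = 0 := by
  have hCTC := (hT.const_mul C).mul_const Cᵀ
  rw [entrywiseIntegral_sub (((entrywiseIntegrable_const _).add hCTC).sub
      (hX.transpose.const_mul C)) (hX.mul_const Cᵀ),
    entrywiseIntegral_sub ((entrywiseIntegrable_const _).add hCTC) (hX.transpose.const_mul C),
    entrywiseIntegral_add (entrywiseIntegrable_const _) hCTC, entrywiseIntegral_const,
    entrywiseIntegral_mul_const (hT.const_mul C), entrywiseIntegral_const_mul hT,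
    entrywiseIntegral_const_mul hX.transpose, entrywiseIntegral_transpose,
    entrywiseIntegral_mul_const hX, hXmean, hTmean, transpose_mul, hS, Matrix.mul_assoc]
  abel

end Correction

lemma ae_eq_zero_of_posSemidef_of_entrywiseIntegral_eq_zero [Fintype n] {N : Ω → Matrix n n ℝ}
    (hN : ∀ᵐ ω ∂μ, (N ω).PosSemidef) (hint : EntrywiseIntegrable μ N)
    (h0 : entrywiseIntegral μ N = 0) : ∀ᵐ ω ∂μ, N ω = 0 := by
  have hdiag : ∀ i, ∀ᵐ ω ∂μ, N ω i i = 0 := fun i => by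
    have hnonneg : 0 ≤ᵐ[μ] fun ω => N ω i i := by
      filter_upwards [hN] with ω hω using hω.diag_nonneg
    exact (integral_eq_zero_iff_of_nonneg_ae hnonneg (hint i i)).mp (congrFun₂ h0 i i)
  filter_upwards [hN, ae_all_iff.2 hdiag] with ω hpsd hω
  exact hpsd.trace_eq_zero_iff.mp (Finset.sum_eq_zero fun i _ => hω i)

end MeasureTheory

namespace Matrix

variable {m n R : Type*} [Fintype n] [CommRing R]

lemma mul_mul_conjTranspose_apply_self [StarRing R] (A : Matrix m n R) (Q : Matrix n n R)
    (i : m) : (A * Q * Aᴴ) i i = A i ⬝ᵥ Q *ᵥ star (A i) := by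
  simp only [mul_apply, conjTranspose_apply, dotProduct, mulVec, Pi.star_apply,
    Finset.sum_mul, Finset.mul_sum]
  rw [Finset.sum_comm]
  exact Finset.sum_congr rfl fun a _ => Finset.sum_congr rfl fun b _ => by ring

lemma PosDef.eq_zero_of_mul_mul_conjTranspose_eq_zero [PartialOrder R] [StarRing R]
    {Q : Matrix n n R} (hQ : Q.PosDef) {A : Matrix m n R} (h : A * Q * Aᴴ = 0) : A = 0 := by
  ext i j
  by_contra hij
  have hrow : star (A i) ≠ 0 := fun h0 => hij (by simpa using congrFun h0 j)
  have hpos := hQ.dotProduct_mulVec_pos hrow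
  rw [star_star, ← mul_mul_conjTranspose_apply_self, h] at hpos
  exact hpos.ne rfl

lemma sub_mul_add_mul_transpose_sub_eq [DecidableEq n] {S T : Matrix n n R} (hS : Sᵀ = S)
    (hT : Tᵀ = T) (hTdet : IsUnit T.det) (X P C : Matrix m n R) (hCS : C * S = P) :
    (X * T⁻¹ - C) * (S + T) * (X * T⁻¹ - C)ᵀ =
      (X * T⁻¹ * S * T⁻¹ * Xᵀ - P * T⁻¹ * Xᵀ - X * T⁻¹ * Pᵀ - -(X * T⁻¹ * Xᵀ))
        + (C * S * Cᵀ + C * T * Cᵀ - C * Xᵀ - X * Cᵀ) := by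
  obtain ⟨K, rfl⟩ : ∃ K, X = K * T := ⟨X * T⁻¹, by rw [nonsing_inv_mul_cancel_right _ _ hTdet]⟩
  subst hCS
  simp only [transpose_mul, transpose_sub, hS, hT, Matrix.mul_assoc,
    mul_nonsing_inv_cancel_right _ _ hTdet, nonsing_inv_mul_cancel_left _ _ hTdet]
  simp only [Matrix.sub_mul, Matrix.mul_sub, Matrix.add_mul, Matrix.mul_add]
  abel

end Matrix

theorem conventional_framework_equality_case_general
    {Ω : Type*} [MeasurableSpace Ω] (ℙ : Measure Ω) [IsProbabilityMeasure ℙ]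
    {m n : ℕ}
    (S : Matrix (Fin n) (Fin n) ℝ) (hS : S.PosDef)
    (Pxy : Matrix (Fin m) (Fin n) ℝ)
    (X : Ω → Matrix (Fin m) (Fin n) ℝ)
    (T : Ω → Matrix (Fin n) (Fin n) ℝ)
    (hTpd : ∀ᵐ ω ∂ℙ, (T ω).PosDef)
    (hXmean : (Matrix.of fun i j => ∫ ω, X ω i j ∂ℙ) = Pxy)
    (hTmean : (Matrix.of fun i j => ∫ ω, T ω i j ∂ℙ) = S)
    (Pest Pac : Ω → Matrix (Fin m) (Fin m) ℝ)
    (hPest : ∀ ω, Pest ω = -(X ω * (T ω)⁻¹ * (X ω)ᵀ))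
    (hPac : ∀ ω, Pac ω =
      X ω * (T ω)⁻¹ * S * (T ω)⁻¹ * (X ω)ᵀ
        - Pxy * (T ω)⁻¹ * (X ω)ᵀ - X ω * (T ω)⁻¹ * Pxyᵀ)
    (hXint : ∀ i j, Integrable (fun ω => X ω i j) ℙ)
    (hTint : ∀ i j, Integrable (fun ω => T ω i j) ℙ)
    (hPestInt : ∀ i j, Integrable (fun ω => Pest ω i j) ℙ)
    (hPacInt : ∀ i j, Integrable (fun ω => Pac ω i j) ℙ)
    (hzero : (Matrix.of fun i j => ∫ ω, (Pac ω - Pest ω) i j ∂ℙ) = 0) :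
    ∃ C : Matrix (Fin m) (Fin n) ℝ, ∀ᵐ ω ∂ℙ, X ω * (T ω)⁻¹ = C := by
  have hSsymm : Sᵀ = S := hS.isHermitian.eq
  obtain ⟨C, hCS⟩ : ∃ C, C * S = Pxy :=
    ⟨Pxy * S⁻¹, nonsing_inv_mul_cancel_right _ _ (S.isUnit_iff_isUnit_det.mp hS.isUnit)⟩
  set N : Ω → Matrix (Fin m) (Fin m) ℝ := fun ω =>
    (Pac ω - Pest ω) + (C * S * Cᵀ + C * T ω * Cᵀ - C * (X ω)ᵀ - X ω * Cᵀ)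
  have hD : EntrywiseIntegrable ℙ fun ω => Pac ω - Pest ω :=
    EntrywiseIntegrable.sub hPacInt hPestInt
  have hNint : EntrywiseIntegrable ℙ N := hD.add (.correction C S hXint hTint)
  have hNmean : entrywiseIntegral ℙ N = 0 := by
    rw [entrywiseIntegral_add hD (.correction C S hXint hTint),
      entrywiseIntegral_correction_eq_zero C S hXint hTint hSsymm (hXmean.trans hCS.symm) hTmean]
    exact (add_zero _).trans hzero
  have hNform : ∀ᵐ ω ∂ℙ,
      N ω = (X ω * (T ω)⁻¹ - C) * (S + T ω) * (X ω * (T ω)⁻¹ - C)ᵀ := by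
    filter_upwards [hTpd] with ω hT
    have hTsymm : (T ω)ᵀ = T ω := hT.isHermitian.eq
    rw [sub_mul_add_mul_transpose_sub_eq hSsymm hTsymm
      ((T ω).isUnit_iff_isUnit_det.mp hT.isUnit) (X ω) Pxy C hCS, ← hPac, ← hPest]
  have hNpsd : ∀ᵐ ω ∂ℙ, (N ω).PosSemidef := by
    filter_upwards [hNform, hTpd] with ω hω hT
    simpa [hω] using (hS.add_posSemidef hT.posSemidef).posSemidef.mul_mul_conjTranspose_same
      (X ω * (T ω)⁻¹ - C)
  refine ⟨C, ?_⟩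
  filter_upwards [hNform, hTpd,
    ae_eq_zero_of_posSemidef_of_entrywiseIntegral_eq_zero hNpsd hNint hNmean] with ω hω hT hN0
  refine sub_eq_zero.mp
    ((hS.add_posSemidef hT.posSemidef).eq_zero_of_mul_mul_conjTranspose_eq_zero ?_)
  simpa [hω] using hN0

/-- **Theorem 1 of the paper (equality case).**
If the expected difference between the actual covariance change `P_ac` and the estimated
covariance change `P_est` vanishes, then the random Kalman gain `X · T⁻¹` is almost surely
constant. Expectation is taken entrywise. -/
theorem conventional_framework_equality_case
    {Ω : Type*} [MeasurableSpace Ω] (ℙ : Measure Ω) [IsProbabilityMeasure ℙ]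
    {m n : ℕ} (hm : 0 < m) (hn : 0 < n)
    (S : Matrix (Fin n) (Fin n) ℝ) (hS : S.PosDef)
    (Pxy : Matrix (Fin m) (Fin n) ℝ)
    (X : Ω → Matrix (Fin m) (Fin n) ℝ)
    (T : Ω → Matrix (Fin n) (Fin n) ℝ)
    (hTpd : ∀ᵐ ω ∂ℙ, (T ω).PosDef)
    (hXmean : (Matrix.of fun i j => ∫ ω, X ω i j ∂ℙ) = Pxy)
    (hTmean : (Matrix.of fun i j => ∫ ω, T ω i j ∂ℙ) = S)
    (Pest Pac : Ω → Matrix (Fin m) (Fin m) ℝ)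
    (hPest : ∀ ω, Pest ω = -(X ω * (T ω)⁻¹ * (X ω)ᵀ))
    (hPac : ∀ ω, Pac ω =
      X ω * (T ω)⁻¹ * S * (T ω)⁻¹ * (X ω)ᵀ
        - Pxy * (T ω)⁻¹ * (X ω)ᵀ - X ω * (T ω)⁻¹ * Pxyᵀ)
    (hXint : ∀ i j, Integrable (fun ω => X ω i j) ℙ)
    (hTint : ∀ i j, Integrable (fun ω => T ω i j) ℙ)
    (hPestInt : ∀ i j, Integrable (fun ω => Pest ω i j) ℙ)
    (hPacInt : ∀ i j, Integrable (fun ω => Pac ω i j) ℙ)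
    (hzero : (Matrix.of fun i j => ∫ ω, (Pac ω - Pest ω) i j ∂ℙ) = 0) :
    ∃ C : Matrix (Fin m) (Fin n) ℝ, ∀ᵐ ω ∂ℙ, X ω * (T ω)⁻¹ = C :=
  conventional_framework_equality_case_general ℙ S hS Pxy X T hTpd hXmean hTmean Pest Pac hPest hPac
    hXint hTint hPestInt hPacInt hzero
end

section
/- Let (Ω, 𝓕, ℙ) be a probability space, let S : Ω → Matrix(n,n,ℝ) be almost surely symmetric positive definite with E[S] = I, and let v : Ω → ℝⁿ have E[v] = v₀, with E[‖S^{1/2}v₀‖²] and E[‖S^{-1/2}v‖²] finite. If E[vᵀ · S⁻¹ · v] = v₀ᵀ v₀, then the random vector S⁻¹·v is almost surely constant. -/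
open Matrix MeasureTheory

/-- **Lemma 2 (Appendix A) of the paper (equality case).**
If `S` is an almost surely symmetric positive definite random matrix with `E[S] = I`
and `v` is a random vector with `E[v] = v₀`, and `E[vᵀ S⁻¹ v] = v₀ᵀ v₀`, then the
random vector `S⁻¹ v` is almost surely constant. Expectations are taken entrywise. -/
theorem expected_inverse_quadratic_form_eq_iff_const
    {Ω : Type*} [MeasurableSpace Ω] (ℙ : Measure Ω) [IsProbabilityMeasure ℙ]
    {n : ℕ} (hn : 0 < n)
    (S : Ω → Matrix (Fin n) (Fin n) ℝ)
    (hSpd : ∀ᵐ ω ∂ℙ, (S ω).PosDef)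
    (hSmean : (Matrix.of fun i j => ∫ ω, S ω i j ∂ℙ) = 1)
    (v : Ω → Fin n → ℝ) (v₀ : Fin n → ℝ)
    (hvmean : ∀ i, ∫ ω, v ω i ∂ℙ = v₀ i)
    (hvint : ∀ i, Integrable (fun ω => v ω i) ℙ)
    (hSint : ∀ i j, Integrable (fun ω => S ω i j) ℙ)
    (hquadS : Integrable (fun ω => v₀ ⬝ᵥ (S ω *ᵥ v₀)) ℙ)
    (hquadSinv : Integrable (fun ω => v ω ⬝ᵥ ((S ω)⁻¹ *ᵥ v ω)) ℙ)
    (heq : ∫ ω, v ω ⬝ᵥ ((S ω)⁻¹ *ᵥ v ω) ∂ℙ = v₀ ⬝ᵥ v₀) :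
    ∃ c : Fin n → ℝ, ∀ᵐ ω ∂ℙ, (S ω)⁻¹ *ᵥ v ω = c := by
  classical
  refine ⟨v₀, ?_⟩
  set f : Ω → ℝ := fun ω =>
    v ω ⬝ᵥ ((S ω)⁻¹ *ᵥ v ω) - (2 * (v₀ ⬝ᵥ v ω) - v₀ ⬝ᵥ (S ω *ᵥ v₀)) with hf
  -- pointwise identity
  have key : ∀ ω, (S ω).PosDef →
      f ω = (v ω - S ω *ᵥ v₀) ⬝ᵥ ((S ω)⁻¹ *ᵥ (v ω - S ω *ᵥ v₀)) := by
    intro ω hpd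
    have hdet : IsUnit (S ω).det := (hpd.det_pos).ne'.isUnit
    have hinv : (S ω)⁻¹ *ᵥ (S ω *ᵥ v₀) = v₀ := by
      rw [mulVec_mulVec, Matrix.nonsing_inv_mul _ hdet, one_mulVec]
    have hsym : (S ω)ᵀ = S ω := hpd.1
    have hsw : (S ω *ᵥ v₀) ⬝ᵥ ((S ω)⁻¹ *ᵥ v ω) = v₀ ⬝ᵥ v ω := by
      rw [dotProduct_comm, dotProduct_mulVec, ← mulVec_transpose, hsym,
        mulVec_mulVec, Matrix.mul_nonsing_inv _ hdet, one_mulVec, dotProduct_comm]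
    rw [hf]
    simp only [Matrix.mulVec_sub, hinv, sub_dotProduct, dotProduct_sub, hsw]
    have h2 : (S ω *ᵥ v₀) ⬝ᵥ v₀ = v₀ ⬝ᵥ (S ω *ᵥ v₀) := dotProduct_comm _ _
    have h3 : v ω ⬝ᵥ v₀ = v₀ ⬝ᵥ v ω := dotProduct_comm _ _
    rw [h2, h3]; ring
  -- integrability of the linear part
  have hint1 : Integrable (fun ω => v₀ ⬝ᵥ v ω) ℙ := by
    simp only [dotProduct]
    exact integrable_finset_sum _ fun i _ => (hvint i).const_mul _
  have hfint : Integrable f ℙ :=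
    hquadSinv.sub ((hint1.const_mul 2).sub hquadS)
  -- expectations of the linear parts
  have hI1 : ∫ ω, v₀ ⬝ᵥ v ω ∂ℙ = v₀ ⬝ᵥ v₀ := by
    simp only [dotProduct]
    rw [integral_finset_sum _ fun i _ => (hvint i).const_mul _]
    simp only [integral_const_mul, hvmean]
  have hone : ∀ i j, ∫ ω, S ω i j ∂ℙ = if i = j then (1:ℝ) else 0 := by
    intro i j
    have := congrFun (congrFun hSmean i) j
    simpa [Matrix.one_apply] using this
  have hI2 : ∫ ω, v₀ ⬝ᵥ (S ω *ᵥ v₀) ∂ℙ = v₀ ⬝ᵥ v₀ := by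
    have hrw : ∀ ω, v₀ ⬝ᵥ (S ω *ᵥ v₀) = ∑ i, ∑ j, v₀ i * v₀ j * S ω i j := by
      intro ω
      simp only [dotProduct, mulVec, dotProduct, Finset.mul_sum]
      exact Finset.sum_congr rfl fun i _ => Finset.sum_congr rfl fun j _ => by ring
    simp_rw [hrw]
    rw [integral_finset_sum _
      (fun i _ => integrable_finset_sum _ fun j _ => (hSint i j).const_mul _)]
    have : ∀ i ∈ Finset.univ, ∫ ω, ∑ j, v₀ i * v₀ j * S ω i j ∂ℙ
        = v₀ i * v₀ i := by
      intro i _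
      rw [integral_finset_sum _ fun j _ => (hSint i j).const_mul _]
      simp_rw [integral_const_mul, hone]
      simp
    rw [Finset.sum_congr rfl this]
    rfl
  -- ∫ f = 0
  have hIsub : Integrable (fun ω => 2 * (v₀ ⬝ᵥ v ω) - v₀ ⬝ᵥ (S ω *ᵥ v₀)) ℙ :=
    (hint1.const_mul 2).sub hquadS
  have hI3 : ∫ ω, (2 * (v₀ ⬝ᵥ v ω) - v₀ ⬝ᵥ (S ω *ᵥ v₀)) ∂ℙ = v₀ ⬝ᵥ v₀ := by
    rw [integral_sub (hint1.const_mul 2) hquadS, integral_const_mul, hI1, hI2]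
    ring
  have hIf : ∫ ω, f ω ∂ℙ = 0 := by
    rw [hf]
    rw [integral_sub hquadSinv hIsub, hI3, heq]
    ring
  -- f ≥ 0 a.e.
  have hfnn : 0 ≤ᵐ[ℙ] f := by
    filter_upwards [hSpd] with ω hpd
    rw [Pi.zero_apply, key ω hpd]
    have := (hpd.inv).posSemidef.re_dotProduct_nonneg (v ω - S ω *ᵥ v₀)
    simpa using this
  -- hence f = 0 a.e.
  have hf0 : f =ᵐ[ℙ] 0 := by
    rw [← integral_eq_zero_iff_of_nonneg_ae hfnn hfint]
    exact hIf
  filter_upwards [hSpd, hf0] with ω hpd hzero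
  have hdet : IsUnit (S ω).det := (hpd.det_pos).ne'.isUnit
  have hw : v ω - S ω *ᵥ v₀ = 0 := by
    by_contra hne
    have hpos := (hpd.inv).re_dotProduct_pos hne
    have : (v ω - S ω *ᵥ v₀) ⬝ᵥ ((S ω)⁻¹ *ᵥ (v ω - S ω *ᵥ v₀)) = 0 := by
      rw [← key ω hpd]; simpa using hzero
    simp [this] at hpos
  have hv : v ω = S ω *ᵥ v₀ := by
    have := sub_eq_zero.mp hw; exact this
  rw [hv, mulVec_mulVec, Matrix.nonsing_inv_mul _ hdet, one_mulVec]
end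

section
/- Let P be a real n×n matrix, P_xy a real n×m matrix, and S a symmetric positive definite real m×m matrix. Then for every real n×m matrix K, trace(P + K·S·Kᵀ − P_xy·Kᵀ − K·P_xyᵀ) ≥ trace(P − P_xy·S⁻¹·P_xyᵀ), and equality holds if and only if K = P_xy·S⁻¹. -/
open Matrix

/-!
Completing the square: with `D = K - P_xy S⁻¹`, the symmetry of `S` gives
`K S Kᵀ - P_xy Kᵀ - K P_xyᵀ = D S Dᵀ - P_xy S⁻¹ P_xyᵀ`. Hence the objective equals the claimed
minimum plus `trace (D S Dᵀ)`, which is nonnegative because `S` is positive semidefinite, and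
vanishes only for `D = 0` because `S` is positive definite.
-/

variable {m n : Type*} [Fintype m]

theorem Matrix.IsSymm.mul_mul_transpose_sub_eq {R : Type*} [CommRing R] [DecidableEq m]
    {S : Matrix m m R} (hS : S.IsSymm) (hdet : IsUnit S.det) (K B : Matrix n m R) :
    K * S * Kᵀ - B * Kᵀ - K * Bᵀ
      = (K - B * S⁻¹) * S * (K - B * S⁻¹)ᵀ - B * S⁻¹ * Bᵀ := by
  rw [transpose_sub, transpose_mul, hS.inv.eq]
  simp only [Matrix.sub_mul, Matrix.mul_sub, Matrix.mul_assoc, nonsing_inv_mul S hdet,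
    ← Matrix.mul_assoc S, mul_nonsing_inv S hdet, Matrix.one_mul, Matrix.mul_one]
  abel

section PosDef

open scoped ComplexOrder

variable {𝕜 : Type*} [RCLike 𝕜] [Fintype n] {S : Matrix m m 𝕜}

theorem Matrix.PosDef.mul_mul_conjTranspose_eq_zero_iff (hS : S.PosDef) {D : Matrix n m 𝕜} :
    D * S * Dᴴ = 0 ↔ D = 0 := by
  classical
  refine ⟨fun h ↦ ?_, fun h ↦ by simp [h]⟩
  suffices ∀ v, Dᴴ *ᵥ v = 0 by
    rw [← conjTranspose_eq_zero]
    exact ext_of_mulVec_single fun i ↦ by rw [this, zero_mulVec]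
  intro v
  have hquad : star (Dᴴ *ᵥ v) ⬝ᵥ (S *ᵥ (Dᴴ *ᵥ v)) = 0 := by
    rw [star_mulVec, dotProduct_mulVec, vecMul_vecMul, ← dotProduct_mulVec,
      conjTranspose_conjTranspose, mulVec_mulVec, h, zero_mulVec, dotProduct_zero]
  by_contra hv
  exact (hS.dotProduct_mulVec_pos hv).ne' hquad

theorem Matrix.PosDef.trace_mul_mul_conjTranspose_eq_zero_iff (hS : S.PosDef)
    {D : Matrix n m 𝕜} : (D * S * Dᴴ).trace = 0 ↔ D = 0 :=
  (hS.posSemidef.mul_mul_conjTranspose_same D).trace_eq_zero_iff.trans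
    hS.mul_mul_conjTranspose_eq_zero_iff

end PosDef

/-- **Optimality of the Kalman gain (equations (6)–(8) of the paper).**
For a symmetric positive definite residual covariance `S`, the gain `K = P_xy S⁻¹`
minimizes `trace (P + K S Kᵀ − P_xy Kᵀ − K P_xyᵀ)` over all gains `K`, the minimum value
is `trace (P − P_xy S⁻¹ P_xyᵀ)`, and the minimizer is unique. -/
theorem kalman_gain_optimality
    {n m : ℕ}
    (P : Matrix (Fin n) (Fin n) ℝ)
    (Pxy : Matrix (Fin n) (Fin m) ℝ)
    (S : Matrix (Fin m) (Fin m) ℝ) (hS : S.PosDef)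
    (K : Matrix (Fin n) (Fin m) ℝ) :
    (P + K * S * Kᵀ - Pxy * Kᵀ - K * Pxyᵀ).trace
        ≥ (P - Pxy * S⁻¹ * Pxyᵀ).trace
    ∧ ((P + K * S * Kᵀ - Pxy * Kᵀ - K * Pxyᵀ).trace
        = (P - Pxy * S⁻¹ * Pxyᵀ).trace ↔ K = Pxy * S⁻¹) := by
  have hsymm : S.IsSymm := isHermitian_iff_isSymm.mp hS.isHermitian
  have hsquare := hsymm.mul_mul_transpose_sub_eq hS.det_pos.ne'.isUnit K Pxy
  set D := K - Pxy * S⁻¹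
  have hsplit : (P + K * S * Kᵀ - Pxy * Kᵀ - K * Pxyᵀ).trace
      = (P - Pxy * S⁻¹ * Pxyᵀ).trace + (D * S * Dᴴ).trace := by
    rw [conjTranspose_eq_transpose_of_trivial, ← trace_add, add_sub_assoc, add_sub_assoc, hsquare]
    congr 1
    abel
  have hnonneg : 0 ≤ (D * S * Dᴴ).trace :=
    (hS.posSemidef.mul_mul_conjTranspose_same D).trace_nonneg
  rw [hsplit, add_eq_left, hS.trace_mul_mul_conjTranspose_eq_zero_iff, sub_eq_zero]
  exact ⟨le_add_of_nonneg_right hnonneg, Iff.rfl⟩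
end
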